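/- arXiv:2012.05201 — 6 statements merged into one kernel-verified Lean document; each statement's English description precedes it below -/
import Mathlib

section
/- For parameters κ₁, κ₂, κ₋₁, κ₋ > 0 and integer n ≥ 3, the quantity ᾱ = n/(n-2) + (κ₋₁ + κ₁ - √((κ₁+κ₋₁)² + 4κ₁κ₂(n-1)))/(κ₋(n-1)) satisfies ᾱ > 1 if and only if κ₁κ₂(n-2)² < κ₋(κ₁+κ₋₁)(n-2) + κ₋²(n-1). -/
theorem alpha_gt_one_iff (n : ℕ) (hn : 3 ≤ n)
    (κ₁ κ₂ κm1 κm : ℝ) (h1 : 0 < κ₁) (h2 : 0 < κ₂) (hm1 : 0 < κm1) (hm : 0 < κm)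
    (αbar : ℝ)
    (hα : αbar = (n : ℝ) / ((n : ℝ) - 2) +
      (κm1 + κ₁ - Real.sqrt ((κ₁ + κm1) ^ 2 + 4 * κ₁ * κ₂ * ((n : ℝ) - 1))) /
        (κm * ((n : ℝ) - 1))) :
    αbar > 1 ↔
      κ₁ * κ₂ * ((n : ℝ) - 2) ^ 2 <
        κm * (κ₁ + κm1) * ((n : ℝ) - 2) + κm ^ 2 * ((n : ℝ) - 1) := by
  have hn3 : (3:ℝ) ≤ (n:ℝ) := by exact_mod_cast hn
  have hn2 : (0:ℝ) < (n:ℝ) - 2 := by linarith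
  have hn1 : (0:ℝ) < (n:ℝ) - 1 := by linarith
  set s : ℝ := Real.sqrt ((κ₁ + κm1) ^ 2 + 4 * κ₁ * κ₂ * ((n : ℝ) - 1)) with hs
  have hs0 : 0 ≤ s := Real.sqrt_nonneg _
  have hDs : s ^ 2 = (κ₁ + κm1) ^ 2 + 4 * κ₁ * κ₂ * ((n : ℝ) - 1) :=
    Real.sq_sqrt (by positivity)
  have hκm1 : (0:ℝ) < κm * ((n:ℝ)-1) := by positivity
  have hid : αbar = 1 + 2/((n:ℝ)-2) - (s - (κ₁+κm1))/(κm*((n:ℝ)-1)) := by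
    rw [hα]; field_simp; ring
  have step1 : αbar > 1 ↔ (s - (κ₁+κm1))/(κm*((n:ℝ)-1)) < 2/((n:ℝ)-2) := by
    rw [hid]; constructor <;> intro h <;> linarith
  rw [step1, div_lt_div_iff₀ hκm1 hn2]
  have hD2 : s ^ 2 * ((n:ℝ)-2)^2 = ((κ₁ + κm1) ^ 2 + 4 * κ₁ * κ₂ * ((n : ℝ) - 1)) * ((n:ℝ)-2)^2 := by rw [hDs]
  have hcpos : (0:ℝ) < (κ₁+κm1)*((n:ℝ)-2) + 2*(κm*((n:ℝ)-1)) := by positivity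
  constructor
  · intro h
    have hsub : (0:ℝ) < (κ₁+κm1)*((n:ℝ)-2) + 2*(κm*((n:ℝ)-1)) - s*((n:ℝ)-2) := by nlinarith
    have hadd : (0:ℝ) < (κ₁+κm1)*((n:ℝ)-2) + 2*(κm*((n:ℝ)-1)) + s*((n:ℝ)-2) := by positivity
    nlinarith [mul_pos hsub hadd, hD2, hn1, mul_pos hn1 hn1]
  · intro h
    nlinarith [hD2, hs0, hn1, hcpos, mul_pos hn1 hn1, mul_nonneg hs0 hn2.le,
      sq_nonneg (s*((n:ℝ)-2) - ((κ₁+κm1)*((n:ℝ)-2) + 2*(κm*((n:ℝ)-1))))]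
end

section
/- If κ₋ > (n-2)κ₂ with κ₁, κ₂, κ₋₁, κ₋ > 0 and n ≥ 3, then ᾱ = n/(n-2) + (κ₋₁ + κ₁ - √((κ₁+κ₋₁)² + 4κ₁κ₂(n-1)))/(κ₋(n-1)) satisfies ᾱ > 1. -/
/-! Since κ₁ < κ₁ + κ₋₁, the square root is below κ₁ + κ₋₁ + 2κ₂(n-1), hence
ᾱ > n/(n-2) - 2κ₂/κ₋, and κ₋ > (n-2)κ₂ makes the right-hand side exceed n/(n-2) - 2/(n-2) = 1. -/

theorem Real.sqrt_sq_add_four_mul_lt {a b c : ℝ} (ha : 0 ≤ a) (hb : 0 < b) (hca : c ≤ a) :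
    √(a ^ 2 + 4 * c * b) < a + 2 * b := by
  rw [Real.sqrt_lt' (by positivity)]
  nlinarith [mul_le_mul_of_nonneg_right hca hb.le, mul_pos hb hb]

theorem alpha_gt_one_of_km_large_general (n : ℕ) (hn : 3 ≤ n)
    (κ₁ κ₂ κm1 κm : ℝ) (h1 : 0 < κ₁) (h2 : 0 < κ₂) (hm1 : 0 < κm1)
    (hbig : κm > ((n : ℝ) - 2) * κ₂)
    (αbar : ℝ)
    (hα : αbar = (n : ℝ) / ((n : ℝ) - 2) +
      (κm1 + κ₁ - Real.sqrt ((κ₁ + κm1) ^ 2 + 4 * κ₁ * κ₂ * ((n : ℝ) - 1))) /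
        (κm * ((n : ℝ) - 1))) :
    αbar > 1 := by
  have hn2 : (0 : ℝ) < n - 2 := by
    rw [sub_pos]
    exact_mod_cast hn
  have hn1 : (0 : ℝ) < n - 1 := by linarith
  have hκm : 0 < κm := (mul_pos hn2 h2).trans hbig
  have hsqrt : √((κ₁ + κm1) ^ 2 + 4 * κ₁ * κ₂ * ((n : ℝ) - 1)) <
      κ₁ + κm1 + 2 * (κ₂ * (n - 1)) := by
    simpa only [mul_assoc] using
      Real.sqrt_sq_add_four_mul_lt (by positivity) (mul_pos h2 hn1) (by linarith : κ₁ ≤ κ₁ + κm1)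
  have hratio : κ₂ / κm < 1 / (n - 2) := by
    rw [div_lt_div_iff₀ hκm hn2]
    linarith
  rw [hα]
  calc (1 : ℝ) = n / (n - 2) - 2 * (1 / (n - 2)) := by field_simp
    _ < n / (n - 2) - 2 * (κ₂ / κm) := by gcongr
    _ = n / (n - 2) + (κm1 + κ₁ - (κ₁ + κm1 + 2 * (κ₂ * (n - 1)))) / (κm * (n - 1)) := by
      field_simp
      ring
    _ < _ := by gcongr

theorem alpha_gt_one_of_km_large (n : ℕ) (hn : 3 ≤ n)
    (κ₁ κ₂ κm1 κm : ℝ) (h1 : 0 < κ₁) (h2 : 0 < κ₂) (hm1 : 0 < κm1) (hm : 0 < κm)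
    (hbig : κm > ((n : ℝ) - 2) * κ₂)
    (αbar : ℝ)
    (hα : αbar = (n : ℝ) / ((n : ℝ) - 2) +
      (κm1 + κ₁ - Real.sqrt ((κ₁ + κm1) ^ 2 + 4 * κ₁ * κ₂ * ((n : ℝ) - 1))) /
        (κm * ((n : ℝ) - 1))) :
    αbar > 1 :=
  alpha_gt_one_of_km_large_general n hn κ₁ κ₂ κm1 κm h1 h2 hm1 hbig αbar hα
end

section
/- Let n ≥ 3 and κ₁, κ₂, κ₋₁, κ₋, κ₃ > 0, and let G(v) = 2κ₁(U(v) − v) − (2κ₋₁ + nκ₂)U(v) + κ₋ n (2U(v) − nv)/(2(n−2)), where U(v) = (v + √(v² + 4κ₋/κ₃))/2. Then G is strictly decreasing on ℝ and has a unique zero v*. -/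
/-!
Write `k = κ₋/κ₃`. The number `u = U(v)` is the positive root of `u² - v u - k = 0`, so
`U(v) - v = k / U(v)`, and `v ↦ U(v)` is the inverse of the increasing bijection
`u ↦ u - k/u` from `(0, ∞)` onto `ℝ`. Splitting `2U - nv = n(U - v) - (n - 2)U` gives
`G(v) = a / U(v) - b U(v)` with `a = (2κ₁ + κ₋ n² / (2(n-2))) k > 0` and
`b = 2κ₋₁ + nκ₂ + κ₋ n / 2 > 0`. Hence `G` is a decreasing function of the increasing `U`, and it
vanishes exactly where `U(v) = √(a/b)`.
-/

open Set

/-- The positive root of `u ^ 2 - v * u - k = 0` (for `0 < k`). -/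
noncomputable def posRoot (k v : ℝ) : ℝ := (v + √(v ^ 2 + 4 * k)) / 2

section posRoot

variable {k : ℝ}

theorem posRoot_pos (hk : 0 < k) (v : ℝ) : 0 < posRoot k v := by
  have habs : |v| < √(v ^ 2 + 4 * k) := by
    rw [← Real.sqrt_sq_eq_abs]
    exact Real.sqrt_lt_sqrt (sq_nonneg v) (by linarith)
  unfold posRoot
  linarith [neg_abs_le v]

theorem posRoot_mul_sub_self (hk : 0 ≤ k) (v : ℝ) : posRoot k v * (posRoot k v - v) = k := by
  have hsq := Real.sq_sqrt (show 0 ≤ v ^ 2 + 4 * k by positivity)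
  unfold posRoot
  linear_combination hsq / 4

theorem posRoot_sub_self (hk : 0 < k) (v : ℝ) : posRoot k v - v = k / posRoot k v := by
  rw [eq_div_iff (posRoot_pos hk v).ne', mul_comm, posRoot_mul_sub_self hk.le]

theorem posRoot_sub_div (hk : 0 < k) (v : ℝ) : posRoot k v - k / posRoot k v = v := by
  linarith [posRoot_sub_self hk v]

theorem posRoot_sub_div_of_pos (hk : 0 ≤ k) {u : ℝ} (hu : 0 < u) : posRoot k (u - k / u) = u := by
  have hsq : (u - k / u) ^ 2 + 4 * k = (u + k / u) ^ 2 := by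
    field_simp
    ring
  rw [posRoot, hsq, Real.sqrt_sq (by positivity)]
  ring

theorem strictMonoOn_sub_div (hk : 0 ≤ k) : StrictMonoOn (fun u : ℝ => u - k / u) (Ioi 0) := by
  intro x hx y _ hxy
  have : k / y ≤ k / x := div_le_div_of_nonneg_left hk hx hxy.le
  dsimp only
  linarith

theorem posRoot_strictMono (hk : 0 < k) : StrictMono (posRoot k) := by
  intro v w hvw
  rw [← posRoot_sub_div hk v, ← posRoot_sub_div hk w] at hvw
  exact ((strictMonoOn_sub_div hk.le).lt_iff_lt (posRoot_pos hk v) (posRoot_pos hk w)).mp hvw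

end posRoot

theorem strictAntiOn_div_sub_mul {a b : ℝ} (ha : 0 ≤ a) (hb : 0 < b) :
    StrictAntiOn (fun u : ℝ => a / u - b * u) (Ioi 0) := by
  intro x hx y _ hxy
  have : a / y ≤ a / x := div_le_div_of_nonneg_left ha hx hxy.le
  dsimp only
  nlinarith

theorem strictAnti_div_posRoot_sub_mul {a b k : ℝ} (ha : 0 ≤ a) (hb : 0 < b) (hk : 0 < k) :
    StrictAnti fun v => a / posRoot k v - b * posRoot k v := fun v w hvw =>
  strictAntiOn_div_sub_mul ha hb (posRoot_pos hk v) (posRoot_pos hk w) (posRoot_strictMono hk hvw)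

theorem exists_div_posRoot_sub_mul_eq_zero {a b k : ℝ} (ha : 0 < a) (hb : 0 < b) (hk : 0 ≤ k) :
    ∃ v, a / posRoot k v - b * posRoot k v = 0 := by
  set u := √(a / b)
  have hu : 0 < u := Real.sqrt_pos.mpr (div_pos ha hb)
  have hu_sq : u ^ 2 = a / b := Real.sq_sqrt (div_pos ha hb).le
  refine ⟨u - k / u, ?_⟩
  have hbu : b * u ^ 2 = a := by
    rw [hu_sq]
    field_simp
  rw [posRoot_sub_div_of_pos hk hu]
  field_simp
  linear_combination -hbu

theorem G_strict_anti_unique_zero (n : ℕ) (hn : 3 ≤ n)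
    (κ₁ κ₂ κm1 κm κ₃ : ℝ) (h1 : 0 < κ₁) (h2 : 0 < κ₂) (hm1 : 0 < κm1)
    (hm : 0 < κm) (h3 : 0 < κ₃)
    (U G : ℝ → ℝ)
    (hU : ∀ v, U v = (v + Real.sqrt (v ^ 2 + 4 * κm / κ₃)) / 2)
    (hG : ∀ v, G v = 2 * κ₁ * (U v - v) - (2 * κm1 + (n : ℝ) * κ₂) * U v +
      κm * (n : ℝ) * (2 * U v - (n : ℝ) * v) / (2 * ((n : ℝ) - 2))) :
    StrictAnti G ∧ ∃! v : ℝ, G v = 0 := by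
  have hn2 : (0 : ℝ) < n - 2 := by
    have : (3 : ℝ) ≤ n := by exact_mod_cast hn
    linarith
  set k := κm / κ₃
  have hk : 0 < k := div_pos hm h3
  set a := (2 * κ₁ + κm * n ^ 2 / (2 * (n - 2))) * k
  set b := 2 * κm1 + n * κ₂ + κm * n / 2
  have ha : 0 < a := by positivity
  have hb : 0 < b := by positivity
  have hU_eq : U = posRoot k := funext fun v => by rw [hU, posRoot, mul_div_assoc]
  have hG_eq : G = fun v => a / posRoot k v - b * posRoot k v := funext fun v => by
    have ha_div : a / posRoot k v = (2 * κ₁ + κm * n ^ 2 / (2 * (n - 2))) * (posRoot k v - v) := by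
      rw [posRoot_sub_self hk, mul_div_assoc]
    rw [hG, hU_eq, ha_div]
    field_simp
    ring
  have hanti : StrictAnti G := hG_eq ▸ strictAnti_div_posRoot_sub_mul ha.le hb hk
  obtain ⟨v, hv⟩ := exists_div_posRoot_sub_mul_eq_zero ha hb hk.le
  replace hv : G v = 0 := by rwa [hG_eq]
  exact ⟨hanti, v, hv, fun w hw => hanti.injective (hw.trans hv.symm)⟩
end

section
/- Suppose 4κ₁κ₂(n−2)² > nκ₋(2(κ₁+κ₋₁)(n−2) + κ₋n(n−1)), with n ≥ 3 and all rate constants positive. Let v* be the unique zero of G(v) = 2κ₁(U(v) − v) − (2κ₋₁ + nκ₂)U(v) + κ₋ n (2U(v) − nv)/(2(n−2)) with U(v) = (v + √(v² + 4κ₋/κ₃))/2. Then A* := (κ₁(U(v*) − v*) − κ₋₁U(v*) − κ₋ n(n−1)U(v*)/(2(n−2)))/2 > 0. -/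
set_option maxHeartbeats 1000000

theorem Astar_pos (n : ℕ) (hn : 3 ≤ n)
    (κ₁ κ₂ κ₃ κm1 κm : ℝ) (h1 : 0 < κ₁) (h2 : 0 < κ₂) (h3 : 0 < κ₃)
    (hm1 : 0 < κm1) (hm : 0 < κm)
    (hcond : 4 * κ₁ * κ₂ * ((n : ℝ) - 2) ^ 2 >
      (n : ℝ) * κm * (2 * (κ₁ + κm1) * ((n : ℝ) - 2) + κm * (n : ℝ) * ((n : ℝ) - 1)))
    (U G : ℝ → ℝ)
    (hU : ∀ v, U v = (v + Real.sqrt (v ^ 2 + 4 * κm / κ₃)) / 2)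
    (hG : ∀ v, G v = 2 * κ₁ * (U v - v) - (2 * κm1 + (n : ℝ) * κ₂) * U v +
      κm * (n : ℝ) * (2 * U v - (n : ℝ) * v) / (2 * ((n : ℝ) - 2)))
    (vstar : ℝ) (hv : G vstar = 0) :
    (κ₁ * (U vstar - vstar) - κm1 * U vstar -
      κm * (n : ℝ) * ((n : ℝ) - 1) * U vstar / (2 * ((n : ℝ) - 2))) / 2 > 0 := by
  have hN : (3:ℝ) ≤ (n:ℝ) := by exact_mod_cast hn
  set N : ℝ := (n : ℝ) with hNdef
  have h2N : (0:ℝ) < N - 2 := by linarith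
  set s : ℝ := Real.sqrt (vstar ^ 2 + 4 * κm / κ₃) with hsdef
  have hk : 0 < 4 * κm / κ₃ := by positivity
  have hsq : s ^ 2 = vstar ^ 2 + 4 * κm / κ₃ := Real.sq_sqrt (by positivity)
  have hs0 : 0 ≤ s := Real.sqrt_nonneg _
  have hspos : 0 < s := by nlinarith [sq_nonneg vstar]
  have hvs : 0 < vstar + s := by nlinarith [sq_nonneg (vstar + s)]
  have h := hv
  rw [hG vstar, hU vstar] at h
  rw [← hsdef] at h
  have hseq : Real.sqrt (vstar ^ 2 + 4 * κm / κ₃) = s := hsdef.symm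
  clear hsdef
  clear_value s
  have heq : 2*κ₁*(N-2)*(s-vstar) - (2*κm1+N*κ₂)*(N-2)*(vstar+s) + κm*N*(s-(N-1)*vstar) = 0 := by
    field_simp at h
    linarith
  have hNpos : 0 < N := by linarith
  have hpoly : 0 < κ₂*(N-2)*(4*κ₁*(N-2)+κm*N^2)
      - κm*N*(2*κ₁*(N-2) + (2*κm1+N*κ₂)*(N-2) + κm*N*(N-1)) := by nlinarith [hcond]
  have hP : 0 < 2*κ₁*(N-2) + (2*κm1+N*κ₂)*(N-2) + κm*N*(N-1) := by
    nlinarith [mul_pos h1 h2N, mul_pos hm1 h2N,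
      mul_pos (mul_pos hm hNpos) (show (0:ℝ) < N-1 by linarith),
      mul_pos (mul_pos h2 hNpos) h2N]
  have key : 0 < κ₂*(N-2)*(vstar+s) - κm*N*s := by
    have h6 : (2*κ₁*(N-2) + (2*κm1+N*κ₂)*(N-2) + κm*N*(N-1)) * (κ₂*(N-2)*(vstar+s) - κm*N*s)
        = s * (κ₂*(N-2)*(4*κ₁*(N-2)+κm*N^2)
          - κm*N*(2*κ₁*(N-2) + (2*κm1+N*κ₂)*(N-2) + κm*N*(N-1)))
          - (κ₂*(N-2)) * (2*κ₁*(N-2)*(s-vstar) - (2*κm1+N*κ₂)*(N-2)*(vstar+s) + κm*N*(s-(N-1)*vstar)) := by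
      ring
    rw [heq] at h6
    have h7 : 0 < (2*κ₁*(N-2) + (2*κm1+N*κ₂)*(N-2) + κm*N*(N-1)) * (κ₂*(N-2)*(vstar+s) - κm*N*s) := by
      rw [h6]; simpa using mul_pos hspos hpoly
    by_contra hc
    push_neg at hc
    have h8 := mul_nonpos_of_nonneg_of_nonpos hP.le hc
    linarith
  rw [hU vstar, hseq]
  clear hNdef hv hU hG h
  clear_value N
  have hrw : (κ₁ * ((vstar + s)/2 - vstar) - κm1 * ((vstar + s)/2) -
      κm * N * (N - 1) * ((vstar + s)/2) / (2 * (N - 2))) / 2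
      = (N * (κ₂*(N-2)*(vstar+s) - κm*N*s)
        + (2*κ₁*(N-2)*(s-vstar) - (2*κm1+N*κ₂)*(N-2)*(vstar+s) + κm*N*(s-(N-1)*vstar)))
        / (8*(N-2)) := by
      have hne : N - 2 ≠ 0 := ne_of_gt h2N
      field_simp
      ring
  rw [hrw, heq]
  have : 0 < 8*(N-2) := by linarith
  positivity
end

section
/- Let n ≥ 3 and κ₁, κ₂, κ₋₁, κ₋ > 0 satisfy κ₁κ₂(n−2)² < κ₋(κ₁+κ₋₁)(n−2) + κ₋²(n−1). Then for all (p₁, r₁) with r₁ ≤ 1 and κ₋/κ₂ ≤ p₁ ≤ nr₁ − 2, the quantity F(p₁,r₁) := r₁κ₁(nr₁ − p₁ − 2) + κ₋(r₁ − (n−1)p₁/(n−2)) − (κ₂+κ₋₁)p₁r₁ − p₁r₁(κ₂p₁ − κ₋) is strictly negative. -/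
theorem F_neg_on_right_triangle (n : ℕ) (hn : 3 ≤ n)
    (κ₁ κ₂ κm1 κm : ℝ) (h1 : 0 < κ₁) (h2 : 0 < κ₂) (hm1 : 0 < κm1) (hm : 0 < κm)
    (hcond : κ₁ * κ₂ * ((n : ℝ) - 2) ^ 2 <
      κm * (κ₁ + κm1) * ((n : ℝ) - 2) + κm ^ 2 * ((n : ℝ) - 1))
    (p₁ r₁ : ℝ) (hr1 : r₁ ≤ 1) (hpl : κm / κ₂ ≤ p₁) (hpu : p₁ ≤ (n : ℝ) * r₁ - 2) :
    r₁ * κ₁ * ((n : ℝ) * r₁ - p₁ - 2) + κm * (r₁ - ((n : ℝ) - 1) * p₁ / ((n : ℝ) - 2)) -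
      (κ₂ + κm1) * p₁ * r₁ - p₁ * r₁ * (κ₂ * p₁ - κm) < 0 := by
  have hn3 : (3:ℝ) ≤ (n:ℝ) := by exact_mod_cast hn
  have hn2 : (0:ℝ) < (n:ℝ) - 2 := by linarith
  have hs : κm ≤ κ₂ * p₁ := by
    rw [div_le_iff₀ h2] at hpl; linarith
  have hp1pos : 0 < p₁ := lt_of_lt_of_le (div_pos hm h2) hpl
  have hr1pos : 0 < r₁ := by nlinarith
  set T : ℝ := κm * (((n:ℝ) - 1) * p₁ / ((n:ℝ) - 2)) with hT
  have hTval : T * ((n:ℝ) - 2) = κm * (((n:ℝ) - 1) * p₁) := by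
    rw [hT]; field_simp
  have hTpos : 0 < T := by
    rw [hT]
    exact mul_pos hm (div_pos (by nlinarith) hn2)
  set G : ℝ := κ₁ * ((n:ℝ) * r₁ - p₁ - 2) + κm - (κ₂ + κm1) * p₁ - p₁ * (κ₂ * p₁ - κm)
    with hG
  have hEq : r₁ * κ₁ * ((n : ℝ) * r₁ - p₁ - 2) +
      κm * (r₁ - ((n : ℝ) - 1) * p₁ / ((n : ℝ) - 2)) -
      (κ₂ + κm1) * p₁ * r₁ - p₁ * r₁ * (κ₂ * p₁ - κm) = r₁ * G - T := by
    rw [hG, hT]; ring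
  rw [hEq]
  rcases le_or_gt G 0 with hGle | hGpos
  · have : r₁ * G ≤ 0 := mul_nonpos_of_nonneg_of_nonpos hr1pos.le hGle
    linarith
  · have h1' : r₁ * G ≤ G := by nlinarith
    have key : G - T < 0 := by
      have hnr : (n:ℝ) * r₁ ≤ (n:ℝ) := by nlinarith
      nlinarith [mul_nonneg (sub_nonneg.2 hs) hn2.le, sq_nonneg (κ₂ * p₁ - κm),
        mul_nonneg (mul_nonneg (sub_nonneg.2 hs) hn2.le) (by linarith : (0:ℝ) ≤ κ₁ + κ₂ + κm1 + κm),
        mul_nonneg (sub_nonneg.2 hs) hm.le,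
        mul_nonneg (mul_nonneg (sub_nonneg.2 hs) hm.le) (by linarith : (0:ℝ) ≤ (n:ℝ) - 1),
        mul_nonneg (sq_nonneg (κ₂ * p₁ - κm)) hn2.le,
        mul_le_mul_of_nonneg_left hnr h1.le, hTval, mul_pos h2 hn2]
    linarith
end

section
/- Let κ₋, κ₃ > 0 and fix v₀ ∈ ℝ. Every solution of the scalar ODE û' = −κ₃û(û − v₀) + κ₋ with û(0) > 0 converges to U(v₀) = (v₀ + √(v₀² + 4κ₋/κ₃))/2 as τ → ∞, and the convergence is exponential. -/
/-!
Factor the right-hand side as `-κ₃ (u - U) (u - L)` with roots `L < 0 < U`. The level `m`,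
half of `min (û 0) U`, is a lower barrier because the vector field is positive there, so
`û - L ≥ m` along the solution. Hence `w = û - U` solves `w' = r w` with rate `r ≤ -κ₃ m`,
and Grönwall's inequality applied to `w²` gives `|w τ| ≤ |w 0| e^{-κ₃ m τ}`.
-/

theorem le_of_hasDerivAt_pos_of_eq {f f' : ℝ → ℝ} {a m : ℝ} (ha : m ≤ f a)
    (hf : ∀ τ ≥ a, HasDerivAt f (f' τ) τ) (hpos : ∀ τ ≥ a, f τ = m → 0 < f' τ) :
    ∀ τ ≥ a, m ≤ f τ := fun _ hτ =>
  image_le_of_deriv_right_lt_deriv_boundary' (f := fun _ => m) (f' := fun _ => 0)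
    continuousOn_const (fun _ _ => hasDerivWithinAt_const _ _ _) ha
    (fun x hx => (hf x hx.1).continuousAt.continuousWithinAt)
    (fun x hx => (hf x hx.1).hasDerivWithinAt) (fun x hx hx' => hpos x hx.1 hx'.symm)
    ⟨hτ, le_rfl⟩

theorem le_mul_exp_of_hasDerivAt_le_mul {g g' : ℝ → ℝ} {a K : ℝ}
    (hg : ∀ τ ≥ a, HasDerivAt g (g' τ) τ) (hle : ∀ τ ≥ a, g' τ ≤ K * g τ) :
    ∀ τ ≥ a, g τ ≤ g a * Real.exp (K * (τ - a)) := by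
  intro τ hτ
  have := le_gronwallBound_of_liminf_deriv_right_le (b := τ) (ε := 0)
    (fun x hx => (hg x hx.1).continuousAt.continuousWithinAt)
    (fun x hx _ hr => (hg x hx.1).hasDerivWithinAt.liminf_right_slope_le hr) le_rfl
    (fun x hx => by simpa using hle x hx.1) τ ⟨hτ, le_rfl⟩
  rwa [gronwallBound_ε0] at this

theorem abs_le_abs_mul_exp_of_hasDerivAt_mul {w r : ℝ → ℝ} {a c : ℝ}
    (hw : ∀ τ ≥ a, HasDerivAt w (r τ * w τ) τ) (hr : ∀ τ ≥ a, r τ ≤ -c) :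
    ∀ τ ≥ a, |w τ| ≤ |w a| * Real.exp (-c * (τ - a)) := by
  intro τ hτ
  have hsq := le_mul_exp_of_hasDerivAt_le_mul (g := fun t => w t ^ 2) (K := -2 * c)
    (fun t ht => by simpa using (hw t ht).fun_pow 2)
    (fun t ht => by
      have := mul_le_mul_of_nonneg_right (hr t ht) (sq_nonneg (w t))
      linarith) τ hτ
  refine abs_le_of_sq_le_sq ?_ (by positivity)
  calc w τ ^ 2 ≤ w a ^ 2 * Real.exp (-2 * c * (τ - a)) := hsq
    _ = (|w a| * Real.exp (-c * (τ - a))) ^ 2 := by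
      rw [mul_pow, sq_abs, ← Real.exp_nat_mul]; ring_nf

section Quadratic

variable {κm κ₃ v₀ : ℝ}

theorem neg_mul_mul_sub_add_eq (h3 : 0 < κ₃) (hm : 0 ≤ κm) (u : ℝ) :
    -κ₃ * u * (u - v₀) + κm = -κ₃ * (u - (v₀ + Real.sqrt (v₀ ^ 2 + 4 * κm / κ₃)) / 2) *
      (u - (v₀ - Real.sqrt (v₀ ^ 2 + 4 * κm / κ₃)) / 2) := by
  have hs := Real.sq_sqrt (show 0 ≤ v₀ ^ 2 + 4 * κm / κ₃ by positivity)
  linear_combination (norm := skip) -κ₃ / 4 * hs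
  field_simp
  ring

theorem abs_lt_sqrt_sq_add (h3 : 0 < κ₃) (hm : 0 < κm) :
    |v₀| < Real.sqrt (v₀ ^ 2 + 4 * κm / κ₃) := by
  rw [← Real.sqrt_sq_eq_abs]
  gcongr
  linarith [show 0 < 4 * κm / κ₃ by positivity]

end Quadratic

theorem u_layer_exponential_convergence (κm κ₃ v₀ : ℝ) (hm : 0 < κm) (h3 : 0 < κ₃)
    (uhat : ℝ → ℝ) (h0 : 0 < uhat 0)
    (hode : ∀ τ ≥ (0 : ℝ), HasDerivAt uhat (-κ₃ * uhat τ * (uhat τ - v₀) + κm) τ) :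
    ∃ C c : ℝ, 0 < C ∧ 0 < c ∧ ∀ τ ≥ (0 : ℝ),
      |uhat τ - (v₀ + Real.sqrt (v₀ ^ 2 + 4 * κm / κ₃)) / 2| ≤ C * Real.exp (-c * τ) := by
  have hfactor := neg_mul_mul_sub_add_eq (v₀ := v₀) h3 hm.le
  have hroots := abs_lt.1 (abs_lt_sqrt_sq_add (v₀ := v₀) h3 hm)
  obtain ⟨hL, hU⟩ : (v₀ - Real.sqrt (v₀ ^ 2 + 4 * κm / κ₃)) / 2 < 0 ∧
      0 < (v₀ + Real.sqrt (v₀ ^ 2 + 4 * κm / κ₃)) / 2 := by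
    constructor <;> linarith
  set U := (v₀ + Real.sqrt (v₀ ^ 2 + 4 * κm / κ₃)) / 2
  set L := (v₀ - Real.sqrt (v₀ ^ 2 + 4 * κm / κ₃)) / 2
  obtain ⟨m, hm0, hmU, hmu0⟩ : ∃ m, 0 < m ∧ m < U ∧ m ≤ uhat 0 :=
    ⟨min (uhat 0) U / 2, by positivity, by linarith [min_le_right (uhat 0) U],
      by linarith [min_le_left (uhat 0) U]⟩
  have hlow : ∀ τ ≥ (0 : ℝ), m ≤ uhat τ := by
    refine le_of_hasDerivAt_pos_of_eq hmu0 hode ?_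
    intro τ _ hτ
    rw [hfactor, hτ]
    have : 0 < κ₃ * (U - m) * (m - L) := by apply mul_pos <;> [positivity; linarith]
    linarith
  have hdecay := abs_le_abs_mul_exp_of_hasDerivAt_mul (w := fun τ => uhat τ - U)
    (r := fun τ => -κ₃ * (uhat τ - L)) (c := κ₃ * m)
    (fun τ hτ => ((hode τ hτ).sub_const U).congr_deriv (by rw [hfactor]; ring))
    (fun τ hτ => by nlinarith [hlow τ hτ])
  refine ⟨|uhat 0 - U| + 1, κ₃ * m, by positivity, by positivity, fun τ hτ => ?_⟩
  calc |uhat τ - U| ≤ |uhat 0 - U| * Real.exp (-(κ₃ * m) * (τ - 0)) := hdecay τ hτ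
    _ ≤ (|uhat 0 - U| + 1) * Real.exp (-(κ₃ * m) * τ) := by
      rw [sub_zero]; gcongr; linarith
end
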